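/- For every nonzero real number λ and every n ≥ 0, the fully degenerate Bell polynomials are expressed in terms of the degenerate Bernoulli polynomials of the second kind as φ_{n,λ}(x) = Σ_{l=0}^{n} β_{l,λ} S_{2,λ}(n,l) + Σ_{k=1}^{n} { (1/k!) Σ_{j=0}^{n−1} Σ_{l=0}^{k−1} C(n,j) C(k−1,l) (1)_{n−j,λ} (−1)^{k−1−l} φ_{j,λ}(l) } b_{k,λ}(x), as polynomials in x, where C(·,·) denotes binomial coefficients. -/

import Mathlib

open Nat PowerSeries Finset

noncomputable section

/-- λ-falling factorial (x)_{n,λ} = x(x−λ)···(x−(n−1)λ). -/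
def dfall (l x : ℝ) (n : ℕ) : ℝ := ∏ i ∈ range n, (x - i * l)

/-- degenerate exponential e_λ^x(t) = Σ (x)_{n,λ} t^n/n! as a formal power series. -/
def degExp (l x : ℝ) : PowerSeries ℝ := PowerSeries.mk fun n => dfall l x n / n !

/-- degenerate logarithm log_λ(1+t) = Σ_{n≥1} (∏_{j=1}^{n−1}(λ−j)) t^n/n!. -/
def degLog (l : ℝ) : PowerSeries ℝ :=
  PowerSeries.mk fun n => if n = 0 then 0 else (∏ j ∈ range (n - 1), (l - (j + 1))) / n !

/-- composition Σ_k a_k f^k, valid when f has zero constant term. -/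
def psComp (a : ℕ → ℝ) (f : PowerSeries ℝ) : PowerSeries ℝ :=
  PowerSeries.mk fun n => ∑ k ∈ range (n + 1), a k * PowerSeries.coeff (R := ℝ) n (f ^ k)

/-- e_λ^x(f), the degenerate exponential composed with f (f with zero constant term). -/
def degExpComp (l x : ℝ) (f : PowerSeries ℝ) : PowerSeries ℝ :=
  psComp (fun k => dfall l x k / k !) f

/-- degenerate Stirling numbers of the second kind. -/
def dS2 (l : ℝ) (n k : ℕ) : ℝ :=
  (n ! : ℝ) / k ! * PowerSeries.coeff (R := ℝ) n ((degExp l 1 - 1) ^ k)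

/-- degenerate Stirling numbers of the first kind. -/
def dS1 (l : ℝ) (n k : ℕ) : ℝ :=
  (n ! : ℝ) / k ! * PowerSeries.coeff (R := ℝ) n (degLog l ^ k)

/-- (signed) Stirling numbers of the first kind: coefficients of x(x-1)···(x-n+1). -/
def sS1 (n k : ℕ) : ℝ := (descPochhammer ℝ n).coeff k

/-- fully degenerate Bell polynomial φ_{n,λ}(x). -/
def dBell (l : ℝ) (n : ℕ) (x : ℝ) : ℝ := ∑ k ∈ range (n + 1), dS2 l n k * dfall l x k

/-- degenerate Whitney numbers of the second kind. -/
def dW (m : ℕ) (l : ℝ) (n k : ℕ) : ℝ :=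
  (n ! : ℝ) / k ! *
    PowerSeries.coeff (R := ℝ) n (degExp l 1 * ((degExp l (m : ℝ) - 1) * PowerSeries.C (R := ℝ) (1 / m)) ^ k)

/-- fully degenerate Dowling polynomial d_{m,λ}(n,x). -/
def dDowling (m : ℕ) (l : ℝ) (n : ℕ) (x : ℝ) : ℝ :=
  ∑ k ∈ range (n + 1), dW m l n k * dfall l x k

/-- division of a power series by t (coefficient shift). -/
def divT (f : PowerSeries ℝ) : PowerSeries ℝ :=
  PowerSeries.mk fun n => PowerSeries.coeff (R := ℝ) (n + 1) f

/-- degenerate Bernoulli polynomials β_{n,λ}(x): (t/(e_λ(t)−1)) e_λ^x(t) = Σ β_{n,λ}(x) tⁿ/n!. -/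
def dBernoulliPoly (l : ℝ) (n : ℕ) (x : ℝ) : ℝ :=
  (n ! : ℝ) * PowerSeries.coeff (R := ℝ) n ((divT (degExp l 1 - 1))⁻¹ * degExp l x)

/-- the λ-falling factorial polynomial (x)_{k,λ}. -/
def dfallPoly (l : ℝ) (k : ℕ) : Polynomial ℝ :=
  ∏ i ∈ range k, (Polynomial.X - Polynomial.C (i * l))

/-- degenerate poly-Bell polynomials B^{(r)}_{n,λ}(x). -/
def dPolyBell (r : ℤ) (l : ℝ) (n : ℕ) (x : ℝ) : ℝ :=
  (n ! : ℝ) * PowerSeries.coeff (R := ℝ) n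
    (divT (psComp (fun k => if k = 0 then 0 else dfall l 1 k / ((k - 1)! * (k : ℝ) ^ r))
        (degLog l)) *
      (divT (degExp l 1 - 1))⁻¹ * degExp l x)

/-- degenerate Bernoulli polynomials of the second kind b_{n,λ}(x). -/
def dBern2 (l : ℝ) (n : ℕ) (x : ℝ) : ℝ :=
  (n ! : ℝ) *
    PowerSeries.coeff (R := ℝ) n ((divT (degLog l))⁻¹ * PowerSeries.mk fun j => dfall 1 x j / j !)


/-! Since `e_λ^x(t) = (1 + λt)^{x/λ}`, the binomial series `(1 + s)^x` evaluated at
`s = e_λ(t) - 1` is `e_λ^x(t)`: the coefficients of both sides are polynomials in `x`, and for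
natural `x = m` this is `e_λ^m = (e_λ)^m`. Put `A = e_λ(t) - 1` and `C = e_λ(A) - 1`. Then the
generating function of `φ_{n,λ}(x)` is `e_λ^x(A) = (1 + C)^x`, and `log_λ(1 + C) = A` because
`log_λ(1 + t)` inverts `e_λ(t) - 1`. Substituting `t ↦ C` in the generating function of
`b_{k,λ}(x)` gives `(1 + C)^x = (A / C) ∑ b_{k,λ}(x) C^k / k!`. The term `k = 0` is
`A / C = (t / (e_λ(t) - 1))(A)`, whose coefficients give `∑ β_{l,λ} S_{2,λ}(n,l)`; for `k ≥ 1`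
the term is `A C^{k-1}`, and expanding `C^{k-1} = (e_λ(A) - 1)^{k-1}` binomially into the series
`e_λ^i(A)` of the `φ_{j,λ}(i)` gives the second sum. -/

namespace PowerSeries

variable {R : Type*} [CommRing R]

theorem coeff_pow_eq_zero_of_lt {a : R⟦X⟧} (ha : constantCoeff a = 0) {n k : ℕ} (h : n < k) :
    coeff n (a ^ k) = 0 := by
  obtain ⟨b, rfl⟩ := X_dvd_iff.mpr ha
  rw [mul_pow, coeff_X_pow_mul', if_neg (by omega)]

theorem coeff_subst_eq_sum_range {a : R⟦X⟧} (ha : constantCoeff a = 0) (f : R⟦X⟧) (n : ℕ) :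
    coeff n (f.subst a) = ∑ k ∈ range (n + 1), coeff k f * coeff n (a ^ k) := by
  rw [coeff_subst' (HasSubst.of_constantCoeff_zero' ha)]
  refine finsum_eq_sum_of_support_subset _ fun k hk => ?_
  by_contra h
  simp only [coe_range, Set.mem_Iio, not_lt] at h
  exact hk (by simp [coeff_pow_eq_zero_of_lt ha (Nat.lt_of_succ_le h)])

theorem coeff_mul_subst_eq_sum_range {a : R⟦X⟧} (ha : constantCoeff a = 0) (g f : R⟦X⟧)
    (n : ℕ) :
    coeff n (g * f.subst a) = ∑ k ∈ range (n + 1), coeff k f * coeff n (g * a ^ k) := by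
  have hterm : ∀ p ∈ antidiagonal n, coeff p.1 g * coeff p.2 (f.subst a) =
      ∑ k ∈ range (n + 1), coeff k f * (coeff p.1 g * coeff p.2 (a ^ k)) := by
    intro p hp
    rw [HasAntidiagonal.mem_antidiagonal] at hp
    rw [coeff_subst_eq_sum_range ha, mul_sum]
    refine sum_subset (range_subset_range.2 (by omega)) (fun k _ hk => ?_) |>.trans
      (sum_congr rfl fun k _ => by ring)
    rw [coeff_pow_eq_zero_of_lt ha (by simp at hk; omega), mul_zero, mul_zero]
  simp only [coeff_mul, sum_congr rfl hterm, mul_sum]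
  exact sum_comm

theorem constantCoeff_subst_of_constantCoeff_eq_zero {a : R⟦X⟧} (ha : constantCoeff a = 0)
    (f : R⟦X⟧) : constantCoeff (f.subst a) = constantCoeff f := by
  rw [← coeff_zero_eq_constantCoeff_apply, coeff_subst_eq_sum_range ha]
  simp

theorem subst_inv {K : Type*} [Field K] {a : K⟦X⟧} (ha : constantCoeff a = 0) (f : K⟦X⟧) :
    f⁻¹.subst a = (f.subst a)⁻¹ := by
  have hsubst := HasSubst.of_constantCoeff_zero' ha
  by_cases hf : constantCoeff f = 0
  · rw [inv_eq_zero.mpr hf,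
      inv_eq_zero.mpr (by rwa [constantCoeff_subst_of_constantCoeff_eq_zero ha]),
      ← coe_substAlgHom hsubst, map_zero]
  · rw [eq_inv_iff_mul_eq_one (by rwa [constantCoeff_subst_of_constantCoeff_eq_zero ha]),
      ← subst_mul hsubst, PowerSeries.inv_mul_cancel f hf, ← coe_substAlgHom hsubst, map_one]

theorem subst_one_add_X_pow {a : R⟦X⟧} (ha : constantCoeff a = 0) (m : ℕ) :
    ((1 + X) ^ m : R⟦X⟧).subst a = (1 + a) ^ m := by
  have hsubst := HasSubst.of_constantCoeff_zero' ha
  rw [← coe_substAlgHom hsubst, map_pow, map_add, map_one, coe_substAlgHom, subst_X hsubst]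

end PowerSeries

theorem Polynomial.eq_of_eval_natCast_eq {R : Type*} [CommRing R] [IsDomain R] [CharZero R]
    {p q : Polynomial R} (h : ∀ m : ℕ, p.eval (m : R) = q.eval (m : R)) : p = q :=
  Polynomial.eq_of_infinite_eval_eq p q <|
    (Set.infinite_range_of_injective Nat.cast_injective).mono (by rintro _ ⟨m, rfl⟩; exact h m)

theorem dfall_succ (l x : ℝ) (n : ℕ) : dfall l x (n + 1) = dfall l x n * (x - n * l) :=
  prod_range_succ _ n

theorem eval_dfallPoly (l x : ℝ) (k : ℕ) : (dfallPoly l k).eval x = dfall l x k := by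
  simp [dfallPoly, dfall, Polynomial.eval_prod]

theorem dfall_eq_pow_mul_dfall_one {l : ℝ} (hl : l ≠ 0) (x : ℝ) (n : ℕ) :
    dfall l x n = l ^ n * dfall 1 (x / l) n := by
  have hpow : l ^ n = ∏ _i ∈ range n, l := by simp
  rw [dfall, dfall, hpow, ← prod_mul_distrib]
  exact prod_congr rfl fun i _ => by field_simp

theorem Ring.choose_eq_dfall_one_div_factorial (x : ℝ) (n : ℕ) :
    Ring.choose x n = dfall 1 x n / n ! := by
  rw [eq_div_iff (by positivity), mul_comm, ← nsmul_eq_mul,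
    ← Ring.descPochhammer_eq_factorial_smul_choose]
  induction n with
  | zero => simp [dfall]
  | succ n ih =>
    rw [descPochhammer_succ_right, Polynomial.smeval_mul, ih, dfall_succ]
    simp [Polynomial.smeval_natCast]

theorem coeff_degExp (l x : ℝ) (n : ℕ) : coeff n (degExp l x) = dfall l x n / n ! :=
  coeff_mk _ _

theorem degExp_one_eq_binomialSeries (x : ℝ) :
    degExp 1 x = PowerSeries.binomialSeries ℝ x := by
  ext n
  rw [coeff_degExp, binomialSeries_coeff, Ring.choose_eq_dfall_one_div_factorial, smul_eq_mul,
    mul_one]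

theorem degExp_eq_rescale {l : ℝ} (hl : l ≠ 0) (x : ℝ) :
    degExp l x = rescale l (degExp 1 (x / l)) := by
  ext n
  rw [coeff_rescale, coeff_degExp, coeff_degExp, dfall_eq_pow_mul_dfall_one hl, mul_div_assoc]

theorem degExp_add {l : ℝ} (hl : l ≠ 0) (x y : ℝ) :
    degExp l (x + y) = degExp l x * degExp l y := by
  simp only [degExp_eq_rescale hl, add_div, degExp_one_eq_binomialSeries, binomialSeries_add,
    map_mul]

theorem degExp_zero (l : ℝ) : degExp l 0 = 1 := by
  ext n
  rcases n with _ | n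
  · simp [coeff_degExp, dfall]
  · simp [coeff_degExp, dfall, prod_range_succ']

theorem degExp_natCast {l : ℝ} (hl : l ≠ 0) (m : ℕ) : degExp l m = degExp l 1 ^ m := by
  induction m with
  | zero => simp [degExp_zero]
  | succ m ih => rw [Nat.cast_succ, degExp_add hl, ih, pow_succ]

theorem degExp_one_natCast (m : ℕ) : degExp 1 m = (1 + X) ^ m := by
  rw [degExp_one_eq_binomialSeries, binomialSeries_nat]

theorem degExp_self {l : ℝ} (hl : l ≠ 0) : degExp l l = 1 + C l * X := by
  have h := degExp_one_natCast 1
  rw [Nat.cast_one, pow_one] at h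
  rw [degExp_eq_rescale hl, div_self hl, h, map_add, map_one, rescale_X]

theorem constantCoeff_degExp (l x : ℝ) : constantCoeff (degExp l x) = 1 := by
  simp [← coeff_zero_eq_constantCoeff_apply, coeff_degExp, dfall]

theorem constantCoeff_degExp_sub_one (l : ℝ) : constantCoeff (degExp l 1 - 1) = 0 := by
  rw [map_sub, constantCoeff_degExp, map_one, sub_self]

theorem coeff_one_degExp_sub_one (l : ℝ) : coeff 1 (degExp l 1 - 1) = 1 := by
  simp [coeff_degExp, dfall]

theorem degExp_one_subst_degExp_sub_one {l : ℝ} (hl : l ≠ 0) (x : ℝ) :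
    (degExp 1 x).subst (degExp l 1 - 1) = degExp l x := by
  set A := degExp l 1 - 1 with hA_def
  have hA : constantCoeff A = 0 := constantCoeff_degExp_sub_one l
  ext n
  have hleft (y : ℝ) : coeff n ((degExp 1 y).subst A) =
      (∑ k ∈ range (n + 1), Polynomial.C (coeff n (A ^ k) / k !) * dfallPoly 1 k).eval y := by
    simp only [coeff_subst_eq_sum_range hA, Polynomial.eval_finsetSum, Polynomial.eval_mul,
      Polynomial.eval_C, eval_dfallPoly, coeff_degExp]
    exact sum_congr rfl fun k _ => by ring
  have hright (y : ℝ) :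
      coeff n (degExp l y) = (Polynomial.C (1 / n ! : ℝ) * dfallPoly l n).eval y := by
    rw [Polynomial.eval_mul, Polynomial.eval_C, eval_dfallPoly, coeff_degExp, one_div_mul_eq_div]
  have hnat (m : ℕ) : (degExp 1 m).subst A = degExp l m := by
    rw [degExp_one_natCast, subst_one_add_X_pow hA, hA_def, add_sub_cancel, degExp_natCast hl]
  rw [hleft, hright]
  exact congrArg _ (Polynomial.eq_of_eval_natCast_eq fun m => by rw [← hleft, ← hright, hnat])

theorem constantCoeff_degLog (l : ℝ) : constantCoeff (degLog l) = 0 := by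
  simp [← coeff_zero_eq_constantCoeff_apply, degLog]

theorem degLog_eq {l : ℝ} (hl : l ≠ 0) : degLog l = l⁻¹ • (degExp 1 l - 1) := by
  ext n
  rw [coeff_smul, map_sub, coeff_degExp, coeff_one, smul_eq_mul]
  rcases n with _ | m
  · simp [degLog, dfall]
  · rw [degLog, coeff_mk, if_neg m.succ_ne_zero, if_neg m.succ_ne_zero, sub_zero, dfall,
      prod_range_succ', Nat.add_sub_cancel]
    push_cast
    field_simp
    ring

theorem degLog_subst_degExp_sub_one {l : ℝ} (hl : l ≠ 0) :
    (degLog l).subst (degExp l 1 - 1) = X := by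
  have hsubst := HasSubst.of_constantCoeff_zero' (constantCoeff_degExp_sub_one l)
  rw [degLog_eq hl, subst_smul hsubst, subst_sub hsubst, degExp_one_subst_degExp_sub_one hl,
    degExp_self hl, ← coe_substAlgHom hsubst, map_one, add_sub_cancel_left, ← smul_eq_C_mul,
    smul_smul, inv_mul_cancel₀ hl, one_smul]

theorem coeff_divT (f : ℝ⟦X⟧) (n : ℕ) : coeff n (divT f) = coeff (n + 1) f :=
  coeff_mk _ _

theorem X_mul_divT {f : ℝ⟦X⟧} (hf : constantCoeff f = 0) : X * divT f = f := by
  ext n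
  rcases n with _ | n
  · simp [hf]
  · rw [coeff_succ_X_mul, coeff_divT]

theorem constantCoeff_divT_degLog (l : ℝ) : constantCoeff (divT (degLog l)) = 1 := by
  simp [← coeff_zero_eq_constantCoeff_apply, coeff_divT, degLog]

theorem dBell_eq_coeff_subst (l : ℝ) (n : ℕ) (x : ℝ) :
    dBell l n x = n ! * coeff n ((degExp l x).subst (degExp l 1 - 1)) := by
  rw [dBell, coeff_subst_eq_sum_range (constantCoeff_degExp_sub_one l), mul_sum]
  refine sum_congr rfl fun k _ => ?_
  rw [dS2, coeff_degExp]
  field_simp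

theorem sum_dBernoulliPoly_zero_mul_dS2 (l : ℝ) (n : ℕ) :
    ∑ j ∈ range (n + 1), dBernoulliPoly l j 0 * dS2 l n j =
      n ! * coeff n ((divT (degExp l 1 - 1))⁻¹.subst (degExp l 1 - 1)) := by
  rw [coeff_subst_eq_sum_range (constantCoeff_degExp_sub_one l), mul_sum]
  refine sum_congr rfl fun j _ => ?_
  rw [dBernoulliPoly, dS2, degExp_zero, mul_one]
  field_simp

theorem factorial_mul_coeff_degExp_sub_one_mul (l : ℝ) (n : ℕ) (g : ℝ⟦X⟧) :
    n ! * coeff n ((degExp l 1 - 1) * g) =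
      ∑ j ∈ range n, n.choose j * dfall l 1 (n - j) * (j ! * coeff j g) := by
  rw [mul_comm (degExp l 1 - 1) g, coeff_mul, Nat.sum_antidiagonal_eq_sum_range_succ_mk,
    sum_range_succ, Nat.sub_self, coeff_zero_eq_constantCoeff_apply, constantCoeff_degExp_sub_one,
    mul_zero, add_zero, mul_sum]
  refine sum_congr rfl fun j hj => ?_
  have hj : j < n := mem_range.mp hj
  rw [map_sub, coeff_one, if_neg (by omega), sub_zero, coeff_degExp, Nat.cast_choose ℝ hj.le]
  field_simp

theorem constantCoeff_degExp_sub_one_subst (l : ℝ) :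
    constantCoeff ((degExp l 1 - 1).subst (degExp l 1 - 1)) = 0 := by
  rw [constantCoeff_subst_of_constantCoeff_eq_zero (constantCoeff_degExp_sub_one l),
    constantCoeff_degExp_sub_one]

theorem degExp_subst_eq_degExp_one_subst {l : ℝ} (hl : l ≠ 0) (x : ℝ) :
    (degExp l x).subst (degExp l 1 - 1) =
      (degExp 1 x).subst ((degExp l 1 - 1).subst (degExp l 1 - 1)) := by
  have hA := HasSubst.of_constantCoeff_zero' (constantCoeff_degExp_sub_one l)
  rw [← subst_comp_subst_apply hA hA, degExp_one_subst_degExp_sub_one hl]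

theorem degLog_subst_degExp_sub_one_subst {l : ℝ} (hl : l ≠ 0) :
    (degLog l).subst ((degExp l 1 - 1).subst (degExp l 1 - 1)) = degExp l 1 - 1 := by
  have hA := HasSubst.of_constantCoeff_zero' (constantCoeff_degExp_sub_one l)
  rw [← subst_comp_subst_apply hA hA, degLog_subst_degExp_sub_one hl, subst_X hA]

theorem divT_degLog_subst_mul {l : ℝ} (hl : l ≠ 0) :
    (divT (degLog l)).subst ((degExp l 1 - 1).subst (degExp l 1 - 1)) *
      (degExp l 1 - 1).subst (degExp l 1 - 1) = degExp l 1 - 1 := by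
  have hC := HasSubst.of_constantCoeff_zero' (constantCoeff_degExp_sub_one_subst l)
  calc _ = (X * divT (degLog l)).subst ((degExp l 1 - 1).subst (degExp l 1 - 1)) := by
        rw [subst_mul hC, subst_X hC, mul_comm]
    _ = degExp l 1 - 1 := by
        rw [X_mul_divT (constantCoeff_degLog l), degLog_subst_degExp_sub_one_subst hl]

theorem divT_degLog_subst_eq {l : ℝ} (hl : l ≠ 0) :
    (divT (degLog l)).subst ((degExp l 1 - 1).subst (degExp l 1 - 1)) =
      (divT (degExp l 1 - 1))⁻¹.subst (degExp l 1 - 1) := by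
  have hA0 := constantCoeff_degExp_sub_one l
  have hA := HasSubst.of_constantCoeff_zero' hA0
  have hA_ne : degExp l 1 - 1 ≠ 0 := fun h => by
    simpa [h] using coeff_one_degExp_sub_one l
  have hN : (divT (degExp l 1 - 1)).subst (degExp l 1 - 1) * (degExp l 1 - 1) =
      (degExp l 1 - 1).subst (degExp l 1 - 1) := by
    calc _ = (X * divT (degExp l 1 - 1)).subst (degExp l 1 - 1) := by
          rw [subst_mul hA, subst_X hA, mul_comm]
      _ = _ := by rw [X_mul_divT hA0]
  rw [subst_inv hA0, eq_inv_iff_mul_eq_one (by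
    rw [constantCoeff_subst_of_constantCoeff_eq_zero hA0, ← coeff_zero_eq_constantCoeff_apply,
      coeff_divT, coeff_one_degExp_sub_one]; exact one_ne_zero)]
  refine mul_right_cancel₀ hA_ne ?_
  rw [mul_assoc, hN, divT_degLog_subst_mul hl, one_mul]

theorem factorial_mul_coeff_degExp_sub_one_subst_pow {l : ℝ} (hl : l ≠ 0) (j m : ℕ) :
    j ! * coeff j (((degExp l 1 - 1).subst (degExp l 1 - 1)) ^ m) =
      ∑ i ∈ range (m + 1), m.choose i * (-1) ^ (m - i) * dBell l j i := by
  have hA := HasSubst.of_constantCoeff_zero' (constantCoeff_degExp_sub_one l)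
  have hpow (i : ℕ) : ((degExp l 1).subst (degExp l 1 - 1)) ^ i =
      (degExp l i).subst (degExp l 1 - 1) := by
    rw [degExp_natCast hl, subst_pow hA]
  rw [subst_sub hA, ← coe_substAlgHom hA, map_one, coe_substAlgHom, sub_eq_add_neg, add_pow,
    map_sum, mul_sum]
  refine sum_congr rfl fun i _ => ?_
  rw [hpow, dBell_eq_coeff_subst, ← map_one C, ← map_neg, ← map_pow, ← map_natCast C,
    mul_assoc, ← map_mul, coeff_mul_C]
  ring

theorem sum_choose_mul_dBell {l : ℝ} (hl : l ≠ 0) (n m : ℕ) :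
    ∑ j ∈ range n, ∑ i ∈ range (m + 1),
        (n.choose j : ℝ) * m.choose i * dfall l 1 (n - j) * (-1) ^ (m - i) * dBell l j i =
      n ! * coeff n ((degExp l 1 - 1) * ((degExp l 1 - 1).subst (degExp l 1 - 1)) ^ m) := by
  rw [factorial_mul_coeff_degExp_sub_one_mul]
  refine sum_congr rfl fun j _ => ?_
  rw [factorial_mul_coeff_degExp_sub_one_subst_pow hl, mul_sum]
  exact sum_congr rfl fun i _ => by ring

theorem dBern2_eq_coeff (l : ℝ) (k : ℕ) (x : ℝ) :
    dBern2 l k x = k ! * coeff k ((divT (degLog l))⁻¹ * degExp 1 x) :=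
  rfl

theorem stmt8 (l : ℝ) (hl : l ≠ 0) (n : ℕ) (x : ℝ) :
    dBell l n x =
      (∑ j ∈ range (n + 1), dBernoulliPoly l j 0 * dS2 l n j) +
        ∑ k ∈ Icc 1 n,
          (1 / (k ! : ℝ) *
              ∑ j ∈ range n, ∑ i ∈ range k,
                n.choose j * (k - 1).choose i * dfall l 1 (n - j) * (-1 : ℝ) ^ (k - 1 - i) *
                  dBell l j (i : ℝ)) *
            dBern2 l k x := by
  have hC0 := constantCoeff_degExp_sub_one_subst l
  have hC := HasSubst.of_constantCoeff_zero' hC0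
  have hBell : (degExp l x).subst (degExp l 1 - 1) =
      (divT (degLog l)).subst ((degExp l 1 - 1).subst (degExp l 1 - 1)) *
        ((divT (degLog l))⁻¹ * degExp 1 x).subst ((degExp l 1 - 1).subst (degExp l 1 - 1)) := by
    rw [← subst_mul hC, ← mul_assoc, PowerSeries.mul_inv_cancel _ (by
      rw [constantCoeff_divT_degLog]; exact one_ne_zero), one_mul,
      degExp_subst_eq_degExp_one_subst hl]
  rw [dBell_eq_coeff_subst, hBell, coeff_mul_subst_eq_sum_range hC0, mul_sum, sum_range_succ',
    add_comm, ← Ico_add_one_right_eq_Icc, sum_Ico_eq_sum_range, Nat.add_sub_cancel]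
  congr 1
  · rw [pow_zero, mul_one, coeff_zero_eq_constantCoeff_apply, map_mul, constantCoeff_inv,
      constantCoeff_divT_degLog, constantCoeff_degExp, inv_one, one_mul, one_mul,
      sum_dBernoulliPoly_zero_mul_dS2, divT_degLog_subst_eq hl]
  · refine sum_congr rfl fun m _ => ?_
    rw [add_comm 1 m, Nat.add_sub_cancel, _root_.pow_succ', ← mul_assoc (_ : ℝ⟦X⟧),
      divT_degLog_subst_mul hl, sum_choose_mul_dBell hl, dBern2_eq_coeff]
    field_simp

end
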